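/- Let G ≤ Aut(T) be a closed subgroup. Then the fixed-point process {X_n} of G is a martingale if and only if for every n ≥ 1 the level stabilizer St_G(n) acts level-transitively on the subtrees rooted at level n. -/

import Mathlib

open MeasureTheory

namespace ArbGal

/-- Vertices of the `d`-regular rooted tree: the free monoid on `{0, …, d-1}`. -/
abbrev V (d : ℕ) := List (Fin d)

instance (d : ℕ) : TopologicalSpace (V d) := ⊥

/-- A permutation of the vertices is an automorphism of the rooted tree iff it
preserves the level of vertices and the prefix (ancestor) relation. -/
def IsTreeAut {d : ℕ} (g : Equiv.Perm (V d)) : Prop :=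
  (∀ v : V d, (g v).length = v.length) ∧ ∀ u v : V d, u <+: v → g u <+: g v

/-- The automorphism group `Aut(T)` of the `d`-regular rooted tree, realized as a
subgroup of the permutation group of the set of vertices. -/
def treeAutGroup (d : ℕ) : Subgroup (Equiv.Perm (V d)) where
  carrier := {g | IsTreeAut g}
  one_mem' := ⟨fun _ => rfl, fun _ _ h => h⟩
  mul_mem' := by
    rintro a b ⟨ha1, ha2⟩ ⟨hb1, hb2⟩
    refine ⟨fun v => ?_, fun u v h => ?_⟩
    · simp only [Equiv.Perm.mul_apply, ha1, hb1]
    · simpa only [Equiv.Perm.mul_apply] using ha2 _ _ (hb2 _ _ h)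
  inv_mem' := by
    rintro g ⟨h1, h2⟩
    have hlen : ∀ v : V _, (g⁻¹ v).length = v.length := by
      intro v
      have := h1 (g⁻¹ v)
      rw [Equiv.Perm.eq_inv_iff_eq.mp rfl] at this
      exact this.symm
    refine ⟨hlen, fun u v huv => ?_⟩
    have h3 : (g⁻¹ v).take (g⁻¹ u).length <+: g⁻¹ v := List.take_prefix _ _
    have h4 : g ((g⁻¹ v).take (g⁻¹ u).length) <+: g (g⁻¹ v) := h2 _ _ h3
    rw [Equiv.Perm.eq_inv_iff_eq.mp rfl] at h4
    have hlen4 : (g ((g⁻¹ v).take (g⁻¹ u).length)).length = u.length := by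
      rw [h1, List.length_take, hlen, hlen]
      exact min_eq_left huv.length_le
    have h5 : g ((g⁻¹ v).take (g⁻¹ u).length) = u := by
      rcases List.prefix_or_prefix_of_prefix h4 huv with h | h
      · exact h.eq_of_length hlen4
      · exact (h.eq_of_length hlen4.symm).symm
    have h6 : (g⁻¹ v).take (g⁻¹ u).length = g⁻¹ u := by
      apply g.injective
      rw [h5, Equiv.Perm.eq_inv_iff_eq.mp rfl]
    rw [← h6]
    exact List.take_prefix _ _

/-- The group `Aut(T)`, as a type. -/
abbrev AutT (d : ℕ) := ↥(treeAutGroup d)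

/-- `Aut(T)` carries the congruence topology, i.e. the topology of pointwise
convergence on the (discrete) set of vertices. -/
instance (d : ℕ) : TopologicalSpace (Equiv.Perm (V d)) :=
  TopologicalSpace.induced (fun g => (g : V d → V d)) Pi.topologicalSpace

variable {d : ℕ}

lemma autT_len (g : AutT d) (v : V d) : ((g : Equiv.Perm (V d)) v).length = v.length := g.2.1 v

lemma autT_prefix (g : AutT d) {u v : V d} (h : u <+: v) :
    (g : Equiv.Perm (V d)) u <+: (g : Equiv.Perm (V d)) v := g.2.2 u v h

/-- The underlying function of the section `g|_v`. -/
def secFun (g : AutT d) (v w : V d) : V d := ((g : Equiv.Perm (V d)) (v ++ w)).drop v.length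

lemma sec_spec (g : AutT d) (v w : V d) :
    (g : Equiv.Perm (V d)) (v ++ w) = (g : Equiv.Perm (V d)) v ++ secFun g v w := by
  have h1 : (g : Equiv.Perm (V d)) v <+: (g : Equiv.Perm (V d)) (v ++ w) :=
    autT_prefix g (List.prefix_append v w)
  have h2 := autT_len g v
  have h3 : (g : Equiv.Perm (V d)) v = ((g : Equiv.Perm (V d)) (v ++ w)).take v.length := by
    rw [← h2]; exact List.prefix_iff_eq_take.mp h1
  conv_lhs => rw [← List.take_append_drop v.length ((g : Equiv.Perm (V d)) (v ++ w))]
  rw [← h3]; rfl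

lemma coe_inv (g : AutT d) : ((g⁻¹ : AutT d) : Equiv.Perm (V d)) = (g : Equiv.Perm (V d))⁻¹ := rfl

lemma sec_spec' (g : AutT d) (v w : V d) :
    (g : Equiv.Perm (V d)) (v ++ w)
      = (g : Equiv.Perm (V d)) v ++ List.drop v.length ((g : Equiv.Perm (V d)) (v ++ w)) :=
  sec_spec g v w

/-- The section (state) `g|_v` of a tree automorphism `g` at the vertex `v`; it is
the unique automorphism satisfying `g(v·w) = g(v)·(g|_v)(w)` for all `w`. -/
def sectionAt (g : AutT d) (v : V d) : AutT d :=
  ⟨{ toFun := secFun g v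
     invFun := secFun g⁻¹ ((g : Equiv.Perm (V d)) v)
     left_inv := by
       intro w
       show secFun g⁻¹ ((g : Equiv.Perm (V d)) v) (secFun g v w) = w
       unfold secFun
       rw [coe_inv, ← sec_spec' g v w, (Equiv.Perm.inv_eq_iff_eq.mpr rfl), autT_len, List.drop_left]
     right_inv := by
       intro w
       show secFun g v (secFun g⁻¹ ((g : Equiv.Perm (V d)) v) w) = w
       unfold secFun
       rw [coe_inv]
       have h := sec_spec' g⁻¹ ((g : Equiv.Perm (V d)) v) w
       rw [coe_inv, (Equiv.Perm.inv_eq_iff_eq.mpr rfl)] at h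
       rw [← h, Equiv.Perm.eq_inv_iff_eq.mp rfl, ← autT_len g v, List.drop_left] },
   by
     constructor
     · intro w
       show (secFun g v w).length = w.length
       unfold secFun
       rw [List.length_drop, autT_len, List.length_append]
       omega
     · intro u w huw
       show secFun g v u <+: secFun g v w
       have h1 : v ++ u <+: v ++ w := by
         obtain ⟨c, rfl⟩ := huw
         rw [← List.append_assoc]
         exact List.prefix_append _ _
       have h2 := autT_prefix g h1
       rw [sec_spec g v u, sec_spec g v w] at h2
       obtain ⟨c, hc⟩ := h2
       rw [List.append_assoc] at hc
       exact ⟨c, List.append_cancel_left hc⟩⟩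

/-- The pointwise stabilizer `St(n)` of the `n`-th level, as a subgroup of `Aut(T)`. -/
def levelStab (d n : ℕ) : Subgroup (AutT d) where
  carrier := {g | ∀ v : V d, v.length = n → (g : Equiv.Perm (V d)) v = v}
  one_mem' := fun _ _ => rfl
  mul_mem' := by
    rintro a b ha hb v hv
    show (a : Equiv.Perm (V d)) ((b : Equiv.Perm (V d)) v) = v
    rw [hb v hv, ha v hv]
  inv_mem' := by
    intro g hg v hv
    show (g : Equiv.Perm (V d))⁻¹ v = v
    conv_lhs => rw [← hg v hv]
    exact Equiv.symm_apply_apply _ _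

/-- Two automorphisms agree on the truncated tree `T^m` (have the same image
under `π_m`). -/
def truncEq (d : ℕ) (m : ℕ) (g h : AutT d) : Prop :=
  ∀ w : V d, w.length ≤ m → (g : Equiv.Perm (V d)) w = (h : Equiv.Perm (V d)) w

/-- `St_G(n)_v^m = π_m(G)`: the projection of the `n`-th level stabilizer of `G`
at the vertex `v`, truncated at depth `m`, coincides with `π_m(G)`. -/
def SectModEq (d : ℕ) (G : Subgroup (AutT d)) (n m : ℕ) (v : V d) : Prop :=
  ∀ a : AutT d,
    (∃ g, g ∈ G ∧ g ∈ levelStab d n ∧ (g : Equiv.Perm (V d)) v = v ∧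
        truncEq d m (sectionAt g v) a)
    ↔ (∃ b ∈ G, truncEq d m b a)

/-- `G` is self-similar: all sections of elements of `G` belong to `G`. -/
def SelfSimilar (d : ℕ) (G : Subgroup (AutT d)) : Prop :=
  ∀ g ∈ G, ∀ v : V d, sectionAt g v ∈ G

/-- `G` is level-transitive. -/
def LevelTrans (d : ℕ) (G : Subgroup (AutT d)) : Prop :=
  ∀ v w : V d, v.length = w.length → ∃ g ∈ G, (g : Equiv.Perm (V d)) v = w

/-- `G` is fractal: self-similar, level-transitive, and every projection
`G_v = φ_v(st_G(v))` is all of `G`. -/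
def Fractal (d : ℕ) (G : Subgroup (AutT d)) : Prop :=
  SelfSimilar d G ∧ LevelTrans d G ∧
    ∀ v : V d, ∀ h ∈ G, ∃ g ∈ G, (g : Equiv.Perm (V d)) v = v ∧ sectionAt g v = h

/-- For every `n ≥ 1`, the level stabilizer `St_G(n)` acts level-transitively on the
subtrees rooted at the vertices of level `n`. -/
def StabLevelTrans (d : ℕ) (G : Subgroup (AutT d)) : Prop :=
  ∀ n : ℕ, 1 ≤ n → ∀ v u w : V d, v.length = n → u.length = w.length →
    ∃ g ∈ G ⊓ levelStab d n, (g : Equiv.Perm (V d)) (v ++ u) = v ++ w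

/-- A fractal group `G ≤ Aut(T)` is mixing with delay constant `N`. -/
def MixingWithDelay (d : ℕ) (G : Subgroup (AutT d)) (N : ℕ) : Prop :=
  Fractal d G ∧ StabLevelTrans d G ∧
    ∀ m : ℕ, 1 ≤ m → ∀ n : ℕ, 1 ≤ n → ∀ v : V d, n + N ≤ v.length → SectModEq d G n m v

/-- A fractal group `G ≤ Aut(T)` is mixing: its level stabilizers act
level-transitively below their level, and for all `n, m ≥ 1` there is a delay
`N = N(m)` with `St_G(n)_v^m = π_m(G)` whenever `|v| ≥ n + N`. -/
def Mixing (d : ℕ) (G : Subgroup (AutT d)) : Prop :=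
  Fractal d G ∧ StabLevelTrans d G ∧
    ∀ m : ℕ, 1 ≤ m → ∃ N : ℕ,
      ∀ n : ℕ, 1 ≤ n → ∀ v : V d, n + N ≤ v.length → SectModEq d G n m v

/-- `g` fixes an end of the tree `T`, i.e. an infinite rooted path. -/
def FixesEnd (d : ℕ) (g : AutT d) : Prop :=
  ∃ ω : ℕ → Fin d, ∀ n : ℕ,
    (g : Equiv.Perm (V d)) (List.ofFn (fun i : Fin n => ω i)) = List.ofFn (fun i : Fin n => ω i)

/-- `X_n(g)`: the number of vertices of level `n` fixed by `g`. -/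
noncomputable def Xfix (d n : ℕ) (g : AutT d) : ℕ :=
  Set.ncard {w : Fin n → Fin d |
    (g : Equiv.Perm (V d)) (List.ofFn w) = List.ofFn w}

/-- The Borel σ-algebra on a closed subgroup of `Aut(T)`. -/
instance (d : ℕ) (G : Subgroup (AutT d)) : MeasurableSpace ↥G := borel ↥G

/-- The fixed-point process `{X_n}` of `G`, with respect to the measure `μ` on `G`,
is a martingale. -/
def FPMartingale (d : ℕ) (G : Subgroup (AutT d)) (μ : Measure ↥G) : Prop :=
  (∀ n : ℕ, 1 ≤ n → Integrable (fun g : ↥G => (Xfix d n (g : AutT d) : ℝ)) μ) ∧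
  ∀ n : ℕ, 1 ≤ n → ∀ t : ℕ → ℝ,
    μ {g : ↥G | ∀ i, 1 ≤ i → i ≤ n → (Xfix d i (g : AutT d) : ℝ) = t i} ≠ 0 →
    ∫ g in {g : ↥G | ∀ i, 1 ≤ i → i ≤ n → (Xfix d i (g : AutT d) : ℝ) = t i},
        (Xfix d (n + 1) (g : AutT d) : ℝ) ∂μ
      = t n * (μ {g : ↥G | ∀ i, 1 ≤ i → i ≤ n → (Xfix d i (g : AutT d) : ℝ) = t i}).toReal

/-!
Conditioning on `X_1, …, X_n` only involves the action on the first `n` levels, so the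
conditioning events are invariant under left multiplication by `St_G(n)`. If `St_G(n)` permutes
the children of each level-`n` vertex `v` transitively, left invariance of `μ` cuts the
intersection of such an event with `{g v = v}` into `d` pieces `{g (v i) = v j}` of equal measure;
hence the children of `v` are fixed, on average, exactly as often as `v` itself, which is the
martingale identity.

Conversely, conditioning on `X_i = d ^ i` for all `i ≤ n` is conditioning on `St_G(n)`, a subgroup
of finite index and hence of positive measure. Inside `St_G(n)` each piece `{g (v i) = v j}` is
either empty or a left translate of `{g (v i) = v i}`, so every child is fixed with conditional
probability at least `1 / d`. The martingale identity says that these probabilities sum to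
`d ^ n`, which forces equality everywhere, so no piece is empty. Transitivity of `St_G(n)` on the
children of every level-`n` vertex, for all `n`, gives transitivity on whole subtrees by induction.
-/

section LeftInvariant

variable {H α : Type*} [Group H] [MeasurableSpace H] [MeasurableMul H] (μ : Measure H)
  [μ.IsMulLeftInvariant] [MulAction H α]

lemma measureReal_inter_setOf_smul_eq_smul {A : Set H} {s : H} (hA : ∀ g, s * g ∈ A ↔ g ∈ A)
    (x y : α) : μ.real (A ∩ {g | g • x = s • y}) = μ.real (A ∩ {g | g • x = y}) := by
  rw [measureReal_def, measureReal_def, ← measure_preimage_mul μ s]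
  congr 2
  ext g
  simp [mul_smul, hA]

lemma measureReal_inter_setOf_smul_eq_le (S : Subgroup H) (x y : α) :
    μ.real (S ∩ {g | g • x = y}) ≤ μ.real (S ∩ {g | g • x = x}) := by
  rcases Set.eq_empty_or_nonempty ((S : Set H) ∩ {g | g • x = y}) with h | ⟨s, hs, rfl⟩
  · simp [h]
  · exact (measureReal_inter_setOf_smul_eq_smul μ (fun g => S.mul_mem_cancel_left hs) x x).le

end LeftInvariant

section TreeAction

lemma length_smul (g : AutT d) (v : V d) : (g • v).length = v.length := autT_len g v

lemma exists_smul_append_singleton (g : AutT d) (v : V d) (i : Fin d) :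
    ∃ j : Fin d, g • (v ++ [i]) = g • v ++ [j] := by
  have hlen : (secFun g v [i]).length = 1 := by
    have h := congrArg List.length (sec_spec g v [i])
    simp only [autT_len, List.length_append, List.length_singleton] at h
    omega
  obtain ⟨j, hj⟩ := List.length_eq_one_iff.mp hlen
  exact ⟨j, hj ▸ sec_spec g v [i]⟩

lemma smul_eq_self_of_prefix {g : AutT d} {u w : V d} (hw : g • w = w) (huw : u <+: w) :
    g • u = u := by
  have h : g • u <+: w := hw ▸ autT_prefix g huw
  rw [List.prefix_iff_eq_take] at h huw
  rw [h, length_smul, ← huw]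

lemma smul_eq_self_of_smul_append_singleton {g : AutT d} {v : V d} {i j : Fin d}
    (h : g • (v ++ [i]) = v ++ [j]) : g • v = v := by
  have hp : g • v <+: v ++ [j] := h ▸ autT_prefix g (List.prefix_append v [i])
  rwa [List.prefix_iff_eq_take, length_smul, List.take_left] at hp

lemma mem_levelStab_iff {n : ℕ} {g : AutT d} :
    g ∈ levelStab d n ↔ ∀ v : V d, v.length = n → g • v = v := Iff.rfl

lemma smul_eq_self_of_mem_levelStab {n : ℕ} {g : AutT d} (hg : g ∈ levelStab d n) {v : V d}
    (hv : v.length ≤ n) : g • v = v := by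
  rcases v with _ | ⟨a, v⟩
  · exact List.eq_nil_of_length_eq_zero (length_smul g [])
  · refine smul_eq_self_of_prefix (mem_levelStab_iff.mp hg _ ?_)
      (List.prefix_append _ (List.replicate (n - (a :: v).length) a))
    simp only [List.length_append, List.length_replicate]
    omega

lemma levelStab_anti {m n : ℕ} (h : m ≤ n) : levelStab d n ≤ levelStab d m :=
  fun _ hg => mem_levelStab_iff.mpr fun _ hv => smul_eq_self_of_mem_levelStab hg (hv.le.trans h)

lemma levelStab_eq_iInf_stabilizer (n : ℕ) :
    levelStab d n = ⨅ v : {v : V d // v.length = n}, MulAction.stabilizer (AutT d) v.1 := by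
  ext g
  simp [mem_levelStab_iff, Subgroup.mem_iInf, MulAction.mem_stabilizer_iff]

instance (n : ℕ) : (levelStab d n).FiniteIndex := by
  have hlevel := List.finite_length_eq (Fin d) n
  have : Finite {v : V d // v.length = n} := hlevel.to_subtype
  rw [levelStab_eq_iInf_stabilizer]
  refine Subgroup.finiteIndex_iInf fun v => ⟨?_⟩
  have horbit : (MulAction.orbit (AutT d) v.1).Finite :=
    hlevel.subset (by rintro _ ⟨g, rfl⟩; exact (length_smul g v.1).trans v.2)
  rw [MulAction.index_stabilizer]
  exact ((Set.ncard_pos horbit).mpr ⟨v.1, MulAction.mem_orbit_self _⟩).ne'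

lemma stabLevelTrans_of_forall_children (G : Subgroup (AutT d))
    (h : ∀ m, 1 ≤ m → ∀ v : V d, v.length = m → ∀ i j : Fin d,
      ∃ s ∈ G ⊓ levelStab d m, s • (v ++ [i]) = v ++ [j]) :
    StabLevelTrans d G := by
  intro n hn v u w hv huw
  induction u using List.reverseRecOn generalizing w with
  | nil =>
    rw [List.eq_nil_of_length_eq_zero huw.symm]
    exact ⟨1, one_mem _, rfl⟩
  | append_singleton u i ih =>
    rcases w.eq_nil_or_concat' with rfl | ⟨w, j, rfl⟩
    · simp at huw
    obtain ⟨g, hg, hgu⟩ := ih w (by simpa using huw)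
    obtain ⟨k, hk⟩ := exists_smul_append_singleton g (v ++ u) i
    obtain ⟨s, hs, hsk⟩ :=
      h (v ++ w).length (by rw [List.length_append]; omega) (v ++ w) rfl k j
    have hs' : s ∈ G ⊓ levelStab d n := inf_le_inf_left G (levelStab_anti (by simp [hv])) hs
    refine ⟨s * g, mul_mem hs' hg, ?_⟩
    change (s * g) • (v ++ (u ++ [i])) = v ++ (w ++ [j])
    rw [← List.append_assoc, mul_smul, hk, show g • (v ++ u) = v ++ w from hgu, hsk,
      List.append_assoc]

end TreeAction

section FixedPoints

lemma exists_ofFn_eq {α : Type*} {n : ℕ} {v : List α} (hv : v.length = n) :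
    ∃ w : Fin n → α, List.ofFn w = v := by
  subst hv
  exact ⟨v.get, List.ofFn_get v⟩

lemma sum_ofFn_succ {α M : Type*} [Fintype α] [AddCommMonoid M] (n : ℕ) (F : List α → M) :
    ∑ w : Fin (n + 1) → α, F (List.ofFn w)
      = ∑ v : Fin n → α, ∑ i : α, F (List.ofFn v ++ [i]) := by
  rw [← (Fin.snocEquiv fun _ => α).sum_comp, Fintype.sum_prod_type_right]
  refine Finset.sum_congr rfl fun v _ => Finset.sum_congr rfl fun i _ => ?_
  simp only [Fin.snocEquiv, Equiv.coe_fn_mk]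
  rw [List.ofFn_succ']
  simp

lemma Xfix_eq_pow_iff {n : ℕ} {g : AutT d} : Xfix d n g = d ^ n ↔ g ∈ levelStab d n := by
  have hcard : Nat.card (Fin n → Fin d) = d ^ n := by simp
  rw [Xfix, ← hcard, ← Set.eq_univ_iff_ncard, Set.eq_univ_iff_forall, mem_levelStab_iff]
  refine ⟨fun h v hv => ?_, fun h w => h _ (List.length_ofFn)⟩
  obtain ⟨w, rfl⟩ := exists_ofFn_eq hv
  exact h w

lemma Xfix_mul_of_mem_levelStab {m n : ℕ} (hmn : m ≤ n) {h : AutT d} (hh : h ∈ levelStab d n)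
    (g : AutT d) : Xfix d m (h * g) = Xfix d m g := by
  unfold Xfix
  congr 1
  ext w
  have hfix : h • g • List.ofFn w = g • List.ofFn w :=
    smul_eq_self_of_mem_levelStab hh (by rw [length_smul, List.length_ofFn]; exact hmn)
  change (h * g) • List.ofFn w = List.ofFn w ↔ g • List.ofFn w = List.ofFn w
  rw [mul_smul, hfix]

end FixedPoints

section Measure

variable (G : Subgroup (AutT d))

def fixCountEvent (n : ℕ) (t : ℕ → ℝ) : Set ↥G :=
  {g | ∀ i, 1 ≤ i → i ≤ n → (Xfix d i (g : AutT d) : ℝ) = t i}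

instance : DiscreteTopology (V d) := ⟨rfl⟩

instance : BorelSpace ↥G := ⟨rfl⟩

lemma isInducing_coeFn :
    Topology.IsInducing fun g : ↥G => ⇑((g : AutT d) : Equiv.Perm (V d)) :=
  Topology.IsInducing.comp ⟨rfl⟩
    (Topology.IsInducing.subtypeVal.comp Topology.IsInducing.subtypeVal)

lemma continuous_smul_const (v : V d) : Continuous fun g : ↥G => g • v :=
  (continuous_apply v).comp (isInducing_coeFn G).continuous

lemma continuous_of_forall_continuous_smul {X : Type*} [TopologicalSpace X] {f : X → ↥G}
    (hf : ∀ v : V d, Continuous fun x => f x • v) : Continuous f :=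
  (isInducing_coeFn G).continuous_iff.mpr (continuous_pi hf)

instance : MeasurableMul ↥G where
  measurable_const_mul h := Continuous.measurable <|
    continuous_of_forall_continuous_smul G fun v => by
      simp only [mul_smul]
      exact continuous_of_discreteTopology.comp (continuous_smul_const G v)
  measurable_mul_const h := Continuous.measurable <|
    continuous_of_forall_continuous_smul G fun v => by
      simp only [mul_smul]
      exact continuous_smul_const G (h • v)

lemma measurableSet_setOf_smul_eq (x y : V d) : MeasurableSet {g : ↥G | g • x = y} :=
  ((isOpen_discrete {y}).preimage (continuous_smul_const G x)).measurableSet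

lemma measurableSet_levelStab_subgroupOf (n : ℕ) :
    MeasurableSet ((levelStab d n).subgroupOf G : Set ↥G) := by
  have h : ((levelStab d n).subgroupOf G : Set ↥G)
      = ⋂ v : {v : V d // v.length = n}, {g : ↥G | g • v.1 = v.1} := by
    ext g
    simp [Subgroup.mem_subgroupOf, mem_levelStab_iff, Subgroup.smul_def]
  rw [h]
  exact MeasurableSet.iInter fun v => measurableSet_setOf_smul_eq G _ _

lemma measure_levelStab_subgroupOf_ne_zero (μ : Measure ↥G) [NeZero μ] [μ.IsMulLeftInvariant]
    (n : ℕ) : μ ((levelStab d n).subgroupOf G) ≠ 0 := by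
  intro h
  have hindex := Subgroup.index_mul_measure _ (measurableSet_levelStab_subgroupOf G n) μ
  rw [h, mul_zero, eq_comm, Measure.measure_univ_eq_zero] at hindex
  exact NeZero.ne μ hindex

lemma Xfix_eq_sum_indicator (n : ℕ) (g : ↥G) :
    (Xfix d n g : ℝ)
      = ∑ w : Fin n → Fin d, {g : ↥G | g • List.ofFn w = List.ofFn w}.indicator 1 g := by
  classical
  rw [Xfix, Set.ncard_eq_toFinset_card', Set.toFinset_ofPred, Finset.card_filter]
  push_cast
  simp [Set.indicator_apply, Subgroup.smul_def]

lemma measurable_Xfix (n : ℕ) : Measurable fun g : ↥G => (Xfix d n g : ℝ) := by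
  simp_rw [Xfix_eq_sum_indicator]
  exact Finset.measurable_sum _ fun w _ =>
    measurable_const.indicator (measurableSet_setOf_smul_eq G _ _)

lemma integrable_Xfix (μ : Measure ↥G) [IsFiniteMeasure μ] (n : ℕ) :
    Integrable (fun g : ↥G => (Xfix d n g : ℝ)) μ := by
  simp_rw [Xfix_eq_sum_indicator]
  exact integrable_finsetSum _ fun w _ =>
    (integrable_const 1).indicator (measurableSet_setOf_smul_eq G _ _)

lemma setIntegral_Xfix (μ : Measure ↥G) [IsFiniteMeasure μ] (A : Set ↥G) (n : ℕ) :
    ∫ g in A, (Xfix d n g : ℝ) ∂μ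
      = ∑ w : Fin n → Fin d, μ.real (A ∩ {g | g • List.ofFn w = List.ofFn w}) := by
  simp_rw [Xfix_eq_sum_indicator]
  rw [integral_finsetSum _ fun w _ =>
    ((integrable_const 1).indicator (measurableSet_setOf_smul_eq G _ _)).restrict]
  refine Finset.sum_congr rfl fun w _ => ?_
  rw [setIntegral_indicator (measurableSet_setOf_smul_eq G _ _)]
  simp

lemma measurableSet_fixCountEvent (n : ℕ) (t : ℕ → ℝ) :
    MeasurableSet (fixCountEvent G n t) := by
  simp only [fixCountEvent, Set.ofPred_forall]
  exact .iInter fun i => .iInter fun _ => .iInter fun _ =>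
    measurable_Xfix G i (measurableSet_singleton _)

lemma mul_mem_fixCountEvent_iff {n : ℕ} {t : ℕ → ℝ} {s : ↥G}
    (hs : (s : AutT d) ∈ levelStab d n) (g : ↥G) :
    s * g ∈ fixCountEvent G n t ↔ g ∈ fixCountEvent G n t := by
  simp only [fixCountEvent, Set.mem_ofPred_eq, Subgroup.coe_mul]
  exact forall₃_congr fun i _ hi => by rw [Xfix_mul_of_mem_levelStab hi hs]

lemma fixCountEvent_pow {m : ℕ} (hm : 1 ≤ m) :
    fixCountEvent G m (fun i => (d : ℝ) ^ i) = ((levelStab d m).subgroupOf G : Set ↥G) := by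
  ext g
  simp only [fixCountEvent, Set.mem_ofPred_eq, SetLike.mem_coe, Subgroup.mem_subgroupOf]
  norm_cast
  simp_rw [Xfix_eq_pow_iff]
  exact ⟨fun h => h m hm le_rfl, fun h i _ hi => levelStab_anti hi h⟩

lemma measureReal_inter_fix_eq_sum (μ : Measure ↥G) [IsFiniteMeasure μ] {A : Set ↥G}
    (hA : MeasurableSet A) (v : V d) (i : Fin d) :
    μ.real (A ∩ {g | g • v = v})
      = ∑ j : Fin d, μ.real (A ∩ {g | g • (v ++ [i]) = v ++ [j]}) := by
  have hunion : {g : ↥G | g • v = v} = ⋃ j : Fin d, {g | g • (v ++ [i]) = v ++ [j]} := by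
    ext g
    simp only [Set.mem_ofPred_eq, Set.mem_iUnion]
    refine ⟨fun hg => ?_, fun ⟨j, hj⟩ => smul_eq_self_of_smul_append_singleton hj⟩
    obtain ⟨j, hj⟩ := exists_smul_append_singleton (g : AutT d) v i
    exact ⟨j, hj.trans (congrArg (· ++ [j]) hg)⟩
  rw [hunion, Set.inter_iUnion]
  refine measureReal_iUnion_fintype (fun j k hjk => ?_)
    (fun j => hA.inter (measurableSet_setOf_smul_eq G _ _))
  refine Set.disjoint_left.mpr fun g ⟨_, hj⟩ ⟨_, hk⟩ => hjk ?_
  simpa using hj.symm.trans hk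

lemma natCast_mul_measureReal_inter_fix_child (μ : Measure ↥G) [IsFiniteMeasure μ]
    [μ.IsMulLeftInvariant] {A : Set ↥G} (hA : MeasurableSet A) {v : V d} {i : Fin d}
    (htrans : ∀ j, ∃ s : ↥G, (∀ g, s * g ∈ A ↔ g ∈ A) ∧
      s • (v ++ [i]) = v ++ [j]) :
    d * μ.real (A ∩ {g | g • (v ++ [i]) = v ++ [i]}) = μ.real (A ∩ {g | g • v = v}) := by
  have hpieces : ∀ j, μ.real (A ∩ {g | g • (v ++ [i]) = v ++ [j]})
      = μ.real (A ∩ {g | g • (v ++ [i]) = v ++ [i]}) := fun j => by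
    obtain ⟨s, hsA, hs⟩ := htrans j
    rw [← hs]
    exact measureReal_inter_setOf_smul_eq_smul μ hsA _ _
  simp [measureReal_inter_fix_eq_sum G μ hA v i, hpieces]

lemma sum_measureReal_inter_fix_children [NeZero d] (μ : Measure ↥G) [IsFiniteMeasure μ]
    [μ.IsMulLeftInvariant] {A : Set ↥G} (hA : MeasurableSet A) {v : V d}
    (htrans : ∀ i j, ∃ s : ↥G, (∀ g, s * g ∈ A ↔ g ∈ A) ∧
      s • (v ++ [i]) = v ++ [j]) :
    ∑ i : Fin d, μ.real (A ∩ {g | g • (v ++ [i]) = v ++ [i]})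
      = μ.real (A ∩ {g | g • v = v}) := by
  refine mul_left_cancel₀ (Nat.cast_ne_zero.mpr (NeZero.ne d) : (d : ℝ) ≠ 0) ?_
  simp [Finset.mul_sum, natCast_mul_measureReal_inter_fix_child G μ hA (htrans _)]

theorem fpMartingale_of_stabLevelTrans (μ : Measure ↥G) [IsFiniteMeasure μ]
    [μ.IsMulLeftInvariant] (hG : StabLevelTrans d G) : FPMartingale d G μ := by
  refine ⟨fun n _ => integrable_Xfix G μ n, fun n hn t _ => ?_⟩
  change ∫ g in fixCountEvent G n t, _ ∂μ = t n * μ.real (fixCountEvent G n t)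
  have hA := measurableSet_fixCountEvent G n t
  have hchildren (v : Fin n → Fin d) :
      ∑ i : Fin d, μ.real (fixCountEvent G n t ∩
          {g | g • (List.ofFn v ++ [i]) = List.ofFn v ++ [i]})
        = μ.real (fixCountEvent G n t ∩ {g | g • List.ofFn v = List.ofFn v}) := by
    have : NeZero d := ⟨(v ⟨0, hn⟩).pos.ne'⟩
    refine sum_measureReal_inter_fix_children G μ hA fun i j => ?_
    obtain ⟨s, hs, hsij⟩ := hG n hn (List.ofFn v) [i] [j] List.length_ofFn rfl
    exact ⟨⟨s, hs.1⟩, mul_mem_fixCountEvent_iff G hs.2, hsij⟩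
  calc ∫ g in fixCountEvent G n t, (Xfix d (n + 1) g : ℝ) ∂μ
      = ∑ v : Fin n → Fin d, ∑ i : Fin d, μ.real (fixCountEvent G n t ∩
          {g | g • (List.ofFn v ++ [i]) = List.ofFn v ++ [i]}) := by
        rw [setIntegral_Xfix]
        exact sum_ofFn_succ n fun u => μ.real (fixCountEvent G n t ∩ {g | g • u = u})
    _ = ∫ g in fixCountEvent G n t, (Xfix d n g : ℝ) ∂μ := by
        simp_rw [hchildren, setIntegral_Xfix]
    _ = ∫ g in fixCountEvent G n t, t n ∂μ :=
        setIntegral_congr_fun hA fun g hg => hg n hn le_rfl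
    _ = t n * μ.real (fixCountEvent G n t) := by rw [setIntegral_const, smul_eq_mul, mul_comm]

lemma measureReal_levelStab_subgroupOf_eq_sum (μ : Measure ↥G) [IsFiniteMeasure μ] {m : ℕ}
    {v : V d} (hv : v.length = m) (i : Fin d) :
    μ.real ((levelStab d m).subgroupOf G : Set ↥G) = ∑ j : Fin d,
      μ.real ((levelStab d m).subgroupOf G ∩ {g | g • (v ++ [i]) = v ++ [j]}) := by
  have hfix : ((levelStab d m).subgroupOf G : Set ↥G) ∩ {g | g • v = v}
      = (levelStab d m).subgroupOf G :=
    Set.inter_eq_left.mpr fun g hg => mem_levelStab_iff.mp (Subgroup.mem_subgroupOf.mp hg) v hv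
  rw [← measureReal_inter_fix_eq_sum G μ (measurableSet_levelStab_subgroupOf G m) v i, hfix]

lemma measureReal_levelStab_subgroupOf_le (μ : Measure ↥G) [IsFiniteMeasure μ]
    [μ.IsMulLeftInvariant] {m : ℕ} {v : V d} (hv : v.length = m) (i : Fin d) :
    μ.real ((levelStab d m).subgroupOf G : Set ↥G)
      ≤ d * μ.real ((levelStab d m).subgroupOf G ∩ {g | g • (v ++ [i]) = v ++ [i]}) := by
  rw [measureReal_levelStab_subgroupOf_eq_sum G μ hv i]
  calc _ ≤ ∑ _j : Fin d,
        μ.real ((levelStab d m).subgroupOf G ∩ {g | g • (v ++ [i]) = v ++ [i]}) :=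
        Finset.sum_le_sum fun j _ => measureReal_inter_setOf_smul_eq_le μ _ _ _
    _ = _ := by simp

lemma exists_mem_levelStab_smul_eq_of_measureReal_eq (μ : Measure ↥G) [IsFiniteMeasure μ]
    [μ.IsMulLeftInvariant] {m : ℕ} {v : V d} (hv : v.length = m) (i : Fin d)
    (h : μ.real ((levelStab d m).subgroupOf G : Set ↥G)
      = d * μ.real ((levelStab d m).subgroupOf G ∩ {g | g • (v ++ [i]) = v ++ [i]}))
    (h0 : μ.real ((levelStab d m).subgroupOf G : Set ↥G) ≠ 0) (j : Fin d) :
    ∃ s ∈ G ⊓ levelStab d m, s • (v ++ [i]) = v ++ [j] := by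
  set S : Set ↥G := ((levelStab d m).subgroupOf G : Set ↥G)
  have hsum : ∑ j : Fin d, μ.real (S ∩ {g | g • (v ++ [i]) = v ++ [j]})
      = ∑ _j : Fin d, μ.real (S ∩ {g | g • (v ++ [i]) = v ++ [i]}) := by
    rw [← measureReal_levelStab_subgroupOf_eq_sum G μ hv i, h]
    simp
  have hj := (Finset.sum_eq_sum_iff_of_le fun j _ =>
    measureReal_inter_setOf_smul_eq_le μ _ _ _).mp hsum j (Finset.mem_univ j)
  have hfix : μ.real (S ∩ {g | g • (v ++ [i]) = v ++ [i]}) ≠ 0 := by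
    rintro hfix
    rw [hfix, mul_zero] at h
    exact h0 h
  obtain ⟨s, hsS, hs⟩ := nonempty_of_measureReal_ne_zero (hj ▸ hfix)
  exact ⟨s, Subgroup.mem_inf.mpr ⟨s.2, Subgroup.mem_subgroupOf.mp hsS⟩, hs⟩

theorem FPMartingale.exists_mem_levelStab_smul_eq {μ : Measure ↥G} [IsProbabilityMeasure μ]
    [μ.IsMulLeftInvariant] (hM : FPMartingale d G μ) {m : ℕ} (hm : 1 ≤ m) {v : V d}
    (hv : v.length = m) (i j : Fin d) :
    ∃ s ∈ G ⊓ levelStab d m, s • (v ++ [i]) = v ++ [j] := by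
  set S : Set ↥G := ((levelStab d m).subgroupOf G : Set ↥G)
  have hS0 : μ S ≠ 0 := measure_levelStab_subgroupOf_ne_zero G μ m
  have hlow (w : Fin (m + 1) → Fin d) :
      μ.real S ≤ d * μ.real (S ∩ {g | g • List.ofFn w = List.ofFn w}) := by
    rw [List.ofFn_succ', List.concat_eq_append]
    exact measureReal_levelStab_subgroupOf_le G μ List.length_ofFn _
  have hmart := hM.2 m hm (fun i => (d : ℝ) ^ i)
    (by change μ (fixCountEvent G m _) ≠ 0; rwa [fixCountEvent_pow G hm])
  change ∫ g in fixCountEvent G m _, _ ∂μ = _ * μ.real (fixCountEvent G m _) at hmart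
  rw [fixCountEvent_pow G hm, setIntegral_Xfix] at hmart
  -- the lower bounds `hlow` add up to exactly the martingale identity at `St_G(m)`
  have hsum : ∑ _w : Fin (m + 1) → Fin d, μ.real S
      = ∑ w : Fin (m + 1) → Fin d,
          d * μ.real (S ∩ {g | g • List.ofFn w = List.ofFn w}) := by
    rw [← Finset.mul_sum, hmart, Finset.sum_const, Finset.card_univ, Fintype.card_fun,
      Fintype.card_fin, Fintype.card_fin, nsmul_eq_mul]
    push_cast
    ring
  obtain ⟨w, hw⟩ := exists_ofFn_eq (show (v ++ [i]).length = m + 1 by simp [hv])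
  have hw' := (Finset.sum_eq_sum_iff_of_le fun w _ => hlow w).mp hsum w (Finset.mem_univ w)
  rw [hw] at hw'
  exact exists_mem_levelStab_smul_eq_of_measureReal_eq G μ hv i hw'
    ((measureReal_ne_zero_iff).mpr hS0) j

end Measure

theorem fixedPointProcess_martingale_iff_stabLevelTrans_general
    (d : ℕ) (G : Subgroup (AutT d))
    (μ : Measure ↥G) [IsProbabilityMeasure μ] [μ.IsMulLeftInvariant] :
    FPMartingale d G μ ↔ StabLevelTrans d G :=
  ⟨fun hM => stabLevelTrans_of_forall_children G fun _ hm _ hv i j =>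
      hM.exists_mem_levelStab_smul_eq G hm hv i j,
    fpMartingale_of_stabLevelTrans G μ⟩

/-- Let `G ≤ Aut(T)` be a closed subgroup.  Then the fixed-point
process `{X_n}` of `G` (with respect to the Haar probability measure `μ_G`) is a
martingale if and only if for every `n ≥ 1` the level stabilizer `St_G(n)` acts
level-transitively on the subtrees rooted at level `n`. -/
theorem fixedPointProcess_martingale_iff_stabLevelTrans
    (d : ℕ) (hd : 2 ≤ d) (G : Subgroup (AutT d))
    (hclosed : IsClosed (G : Set (AutT d)))
    (μ : Measure ↥G) [IsProbabilityMeasure μ] [μ.IsMulLeftInvariant] :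
    FPMartingale d G μ ↔ StabLevelTrans d G :=
  fixedPointProcess_martingale_iff_stabLevelTrans_general d G μ

end ArbGal
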